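/- For every n ≥ 0 and every x, (x+r)^n = Σ_{k=0}^{n} U_r(n,k) · Π_{i=0}^{k-1} (x - i²), as an identity of polynomials. -/

import Mathlib

/-!
Writing `p_k(x) = ∏_{i<k} (x - i²)`, one has `(x + r) p_k = p_{k+1} + (k² + r) p_k`, which is exactly
the recurrence of `centralU`; multiplying the identity for `n` by `x + r` and collecting coefficients
of each `p_k` gives the identity for `n + 1`.
-/

/-- `centralU r n k` is the r-central factorial number with even indices of the second kind. -/
def centralU (r : ℕ) : ℕ → ℕ → ℤ
  | 0, 0 => 1
  | 0, _ + 1 => 0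
  | n + 1, 0 => (r : ℤ) ^ (n + 1)
  | n + 1, k + 1 => centralU r n k + (((k : ℤ) + 1) ^ 2 + r) * centralU r n (k + 1)

open Finset

namespace centralU

variable (r : ℕ)

theorem zero_right (n : ℕ) : centralU r n 0 = (r : ℤ) ^ n := by
  cases n <;> rfl

theorem succ_succ (n k : ℕ) :
    centralU r (n + 1) (k + 1) = centralU r n k + (((k : ℤ) + 1) ^ 2 + r) * centralU r n (k + 1) :=
  rfl

theorem eq_zero_of_lt : ∀ {n k : ℕ}, n < k → centralU r n k = 0
  | 0, _ + 1, _ => rfl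
  | n + 1, k + 1, h => by
    rw [succ_succ, eq_zero_of_lt (by omega), eq_zero_of_lt (by omega), mul_zero, add_zero]

end centralU

section

variable {R : Type*} [CommRing R]

def centralFallingProd (x : R) (k : ℕ) : R :=
  ∏ i ∈ range k, (x - (i : R) ^ 2)

theorem add_mul_centralFallingProd (x : R) (r k : ℕ) :
    (x + r) * centralFallingProd x k =
      centralFallingProd x (k + 1) + ((k : R) ^ 2 + r) * centralFallingProd x k := by
  simp only [centralFallingProd, prod_range_succ]
  ring

theorem add_pow_eq_sum_centralU_mul_centralFallingProd (x : R) (r n : ℕ) :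
    (x + r) ^ n = ∑ k ∈ range (n + 1), (centralU r n k : R) * centralFallingProd x k := by
  induction n with
  | zero => simp [centralU, centralFallingProd]
  | succ n ih =>
    set p := centralFallingProd x
    set g : ℕ → R := fun k => ((k : R) ^ 2 + r) * centralU r n k * p k
    -- the top term vanishes, so the sum of `g` may be shifted by one index
    have htop : g (n + 1) = 0 := by
      simp [g, centralU.eq_zero_of_lt r (Nat.lt_succ_self n)]
    have hbot : g 0 = r ^ (n + 1) := by
      simp [g, p, centralU.zero_right, centralFallingProd, pow_succ']
    have hg : ∑ k ∈ range (n + 1), g k = ∑ k ∈ range (n + 1), g (k + 1) + r ^ (n + 1) := by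
      rw [← add_zero (∑ k ∈ range (n + 1), g k), ← htop, ← sum_range_succ, sum_range_succ', hbot]
    calc (x + r) ^ (n + 1)
        = ∑ k ∈ range (n + 1), (centralU r n k * p (k + 1) + g k) := by
          rw [pow_succ', ih, mul_sum]
          refine sum_congr rfl fun k _ => ?_
          rw [mul_left_comm, add_mul_centralFallingProd]
          ring
      _ = ∑ k ∈ range (n + 1), (centralU r n k * p (k + 1) + g (k + 1)) + r ^ (n + 1) := by
          rw [sum_add_distrib, hg, sum_add_distrib, add_assoc]
      _ = ∑ k ∈ range (n + 2), (centralU r (n + 1) k : R) * p k := by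
          rw [sum_range_succ' (fun k => (centralU r (n + 1) k : R) * p k), centralU.zero_right]
          congr 1
          · refine sum_congr rfl fun k _ => ?_
            rw [centralU.succ_succ]
            push_cast [g]
            ring
          · simp [p, centralFallingProd]

end

theorem centralU_connection (r n : ℕ) (x : ℝ) :
    (x + r) ^ n =
      ∑ k ∈ Finset.range (n + 1),
        (centralU r n k : ℝ) * ∏ i ∈ Finset.range k, (x - (i : ℝ) ^ 2) :=
  add_pow_eq_sum_centralU_mul_centralFallingProd x r n
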